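/- For a normalized nondegenerate C² speed f with c = f_x(0,1) > 0, the function w(r) = r - (c+ε)/r is a sub-solution of f(w'/(1+w²), w/r) = 1 for each ε > 0 and all sufficiently large r, i.e. f(w'/(1+w²), w/r) ≤ 1 for large r. -/

import Mathlib

/-!
With `w r = r - k / r`, homogeneity gives `f (w' / (1 + w²), w / r) = (w / r) * g u` where
`g t = f (t, 1)`, `w / r = 1 - k / r²` and `u = (w' / (1 + w²)) / (w / r) ~ r⁻²`. The first-order
expansion `g u = 1 + c u + o(u)` then yields `r² (f (w' / (1 + w²), w / r) - 1) → c - k`, which is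
`-ε < 0` for `k = c + ε`.
-/

open Filter Topology Asymptotics

theorem HasDerivAt.tendsto_mul_sub {α : Type*} {l : Filter α} {g : ℝ → ℝ} {c x₀ L : ℝ}
    (hg : HasDerivAt g c x₀) {u s : α → ℝ} (hu : Tendsto u l (𝓝 x₀))
    (hsu : Tendsto (fun i => s i * (u i - x₀)) l (𝓝 L)) :
    Tendsto (fun i => s i * (g (u i) - g x₀)) l (𝓝 (c * L)) := by
  have hrem : (fun i => (g (u i) - g x₀ - (u i - x₀) * c) * s i) =o[l]
      fun i => (u i - x₀) * s i :=
    ((hasDerivAt_iff_isLittleO.1 hg).comp_tendsto hu).mul_isBigO (isBigO_refl s l)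
  have hrem₀ : Tendsto (fun i => (g (u i) - g x₀ - (u i - x₀) * c) * s i) l (𝓝 0) := by
    refine (isLittleO_one_iff ℝ).1 (hrem.trans_isBigO ?_)
    simpa only [mul_comm] using hsu.isBigO_one ℝ
  simpa using hrem₀.add (hsu.const_mul c) |>.congr fun i => by ring

theorem apply_eq_mul_apply_div_one {f : ℝ × ℝ → ℝ}
    (hhom : ∀ c : ℝ, 0 < c → ∀ x y : ℝ, f (c * x, c * y) = c * f (x, y))
    (a : ℝ) {b : ℝ} (hb : 0 < b) : f (a, b) = b * f (a / b, 1) := by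
  simpa [mul_div_cancel₀ a hb.ne'] using hhom b hb (a / b) 1

theorem tendsto_const_div_sq_atTop (k : ℝ) : Tendsto (fun r : ℝ => k / r ^ 2) atTop (𝓝 0) :=
  tendsto_const_nhds.div_atTop (tendsto_pow_atTop two_ne_zero)

theorem tendsto_sub_div_self (k : ℝ) : Tendsto (fun r : ℝ => (r - k / r) / r) atTop (𝓝 1) := by
  have h := (tendsto_const_div_sq_atTop k).const_sub 1
  rw [sub_zero] at h
  refine h.congr' ?_
  filter_upwards [eventually_ne_atTop 0] with r hr
  field_simp

theorem tendsto_sq_mul_div_one_add_sq (k : ℝ) :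
    Tendsto (fun r : ℝ => r ^ 2 * ((1 + k / r ^ 2) / (1 + (r - k / r) ^ 2))) atTop (𝓝 1) := by
  have hnum : Tendsto (fun r : ℝ => 1 + k / r ^ 2) atTop (𝓝 1) := by
    simpa using (tendsto_const_div_sq_atTop k).const_add 1
  have hden : Tendsto (fun r : ℝ => 1 / r ^ 2 + ((r - k / r) / r) ^ 2) atTop (𝓝 1) := by
    simpa using (tendsto_const_div_sq_atTop 1).add ((tendsto_sub_div_self k).pow 2)
  have hquot := hnum.div hden one_ne_zero
  rw [div_one] at hquot
  refine hquot.congr' ?_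
  filter_upwards [eventually_ne_atTop 0] with r hr
  simp only [Pi.div_apply]
  field_simp

theorem tendsto_sq_mul_sub_one {f : ℝ × ℝ → ℝ}
    (hhom : ∀ c : ℝ, 0 < c → ∀ x y : ℝ, f (c * x, c * y) = c * f (x, y))
    (hnorm : f (0, 1) = 1) {c : ℝ} (hc : HasDerivAt (fun t => f (t, 1)) c 0) (k : ℝ) :
    Tendsto (fun r : ℝ => r ^ 2 * (f ((1 + k / r ^ 2) / (1 + (r - k / r) ^ 2),
      (r - k / r) / r) - 1)) atTop (𝓝 (c - k)) := by
  set A : ℝ → ℝ := fun r => (1 + k / r ^ 2) / (1 + (r - k / r) ^ 2)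
  set B : ℝ → ℝ := fun r => (r - k / r) / r
  have hB : Tendsto B atTop (𝓝 1) := tendsto_sub_div_self k
  have hsqu : Tendsto (fun r => r ^ 2 * (A r / B r - 0)) atTop (𝓝 1) := by
    have h : Tendsto (fun r => r ^ 2 * A r / B r) atTop (𝓝 (1 / 1)) :=
      (tendsto_sq_mul_div_one_add_sq k).div hB one_ne_zero
    simpa [mul_div_assoc] using h
  have hu : Tendsto (fun r => A r / B r) atTop (𝓝 0) := by
    have h := hsqu.mul (tendsto_const_div_sq_atTop 1)
    rw [mul_zero] at h
    refine h.congr' ?_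
    filter_upwards [eventually_ne_atTop 0] with r hr
    field_simp
    rw [sub_zero]
  have hlim : Tendsto (fun r => B r * (r ^ 2 * (f (A r / B r, 1) - f (0, 1))) - k) atTop
      (𝓝 (c - k)) := by
    simpa using (hB.mul (hc.tendsto_mul_sub hu hsqu)).sub_const k
  refine hlim.congr' ?_
  filter_upwards [eventually_gt_atTop 0, hB.eventually_const_lt one_pos] with r hr hBpos
  have hr : r ≠ 0 := hr.ne'
  have hsqB : r ^ 2 * B r = r ^ 2 - k := by simp only [B]; field_simp
  show _ = r ^ 2 * (f (A r, B r) - 1)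
  clear_value A B
  rw [apply_eq_mul_apply_div_one hhom (A r) hBpos, hnorm]
  linear_combination -hsqB

theorem stmt8_general (f : ℝ × ℝ → ℝ)
    (hf : ContDiff ℝ 2 f)
    (hhom : ∀ c : ℝ, 0 < c → ∀ x y : ℝ, f (c * x, c * y) = c * f (x, y))
    (hnorm : f (0, 1) = 1)
    (c : ℝ) (hc : c = deriv (fun t => f (t, 1)) 0) :
    ∀ ε : ℝ, 0 < ε → ∀ᶠ r in atTop,
      f ((1 + (c + ε) / r ^ 2) / (1 + (r - (c + ε) / r) ^ 2),
         (r - (c + ε) / r) / r) ≤ 1 := by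
  intro ε hε
  have hderiv : HasDerivAt (fun t => f (t, 1)) c 0 := by
    have hfd : DifferentiableAt ℝ f (0, 1) := hf.differentiable (by norm_num) _
    exact hc ▸ (hfd.comp 0 (differentiableAt_id.prodMk (differentiableAt_const 1))).hasDerivAt
  have hneg : c - (c + ε) < 0 := by linarith
  filter_upwards [(tendsto_sq_mul_sub_one hhom hnorm hderiv (c + ε)).eventually_lt_const hneg]
    with r hr
  linarith [neg_of_mul_neg_right hr (sq_nonneg r)]

/-- w(r) = r - (c+ε)/r is a sub-solution of f(w'/(1+w²), w/r) = 1 for large r. -/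
theorem stmt8 (f : ℝ × ℝ → ℝ)
    (hf : ContDiff ℝ 2 f)
    (hhom : ∀ c : ℝ, 0 < c → ∀ x y : ℝ, f (c * x, c * y) = c * f (x, y))
    (hfx : ∀ p : ℝ × ℝ, 0 < deriv (fun t => f (t, p.2)) p.1)
    (hfy : ∀ p : ℝ × ℝ, 0 < deriv (fun t => f (p.1, t)) p.2)
    (hnorm : f (0, 1) = 1)
    (c : ℝ) (hc : c = deriv (fun t => f (t, 1)) 0) (hcpos : 0 < c) :
    ∀ ε : ℝ, 0 < ε → ∀ᶠ r in atTop,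
      f ((1 + (c + ε) / r ^ 2) / (1 + (r - (c + ε) / r) ^ 2),
         (r - (c + ε) / r) / r) ≤ 1 :=
  stmt8_general f hf hhom hnorm c hc
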